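/- Let m > 1, μ > 1 and β > 0. Then there exist positive constants C̄ and k such that for every r₀ ≥ 1, every C with 0 < C ≤ C̄, every t₀ > 1 and every γ > 0 with γ^{(μ+1)/(μ−1)} ≥ k·C^{1−m}, the function u̲(r,t) := C·(t+t₀)^{−1/(m−1)}·[(r+r₀)^{−(μ−1)} − γ·(log(t+t₀))^{−(μ−1)/(μ+1)}]₊^{1/(m−1)} satisfies ∂_t u̲(r,t) ≤ ∂²_r(u̲^m)(r,t) + β·r^μ·∂_r(u̲^m)(r,t) at every point (r,t) with r ≥ 1, t > 0 and (r+r₀)^{−(μ−1)} > γ·(log(t+t₀))^{−(μ−1)/(μ+1)}. -/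

import Mathlib

/-!
Write `a = 1/(m-1)`, `p = μ-1`, `q = (μ-1)/(μ+1)`, `T = t+t₀`, `ρ = r+r₀` and
`F = ρ^{-p} - γ (log T)^{-q}`. Where `F > 0` we have `u̲ = C T^{-a} F^a` and
`u̲^m = C^m T^{-a-1} F^{a+1}`, so both sides are explicit, and after division by
`C T^{-a-1} F^{a-1}` the inequality reads
`a (γ q (log T)^{-q-1} - F) ≤ K (a p ρ^{-2μ} + (p+1) ρ^{-p-2} F) - β r^μ K ρ^{-μ} F`
with `K = (a+1) p C^{m-1}`. Since `r ≤ ρ`, the choice of `C̄` makes the drift term at most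
`a F`.
The bound `γ (log T)^{-q} < ρ^{-p}` gives `(log T)^{-1} ≤ (ρ^{-p}/γ)^{1/q}`; as
`p (1 + 1/q) = 2μ`, the condition on `γ` then makes `γ q (log T)^{-q-1}` at most `K p ρ^{-2μ}`.
-/

open Real Topology

theorem HasDerivAt.max_zero_rpow {f : ℝ → ℝ} {f' x a : ℝ} (hf : HasDerivAt f f' x)
    (hx : 0 < f x) : HasDerivAt (fun y => max (f y) 0 ^ a) (f' * a * f x ^ (a - 1)) x := by
  refine (hf.rpow_const (Or.inl hx.ne')).congr_of_eventuallyEq ?_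
  filter_upwards [hf.continuousAt.eventually (lt_mem_nhds hx)] with y hy
  rw [max_eq_left hy.le]

theorem mul_rpow_neg_sub_one_le {x y γ q : ℝ} (hx : 0 < x) (hγ : 0 < γ) (hq : 0 < q)
    (h : γ * x ^ (-q) ≤ y) : γ * x ^ (-q - 1) ≤ y ^ (1 + q⁻¹) / γ ^ q⁻¹ := by
  have hy : 0 < y := lt_of_lt_of_le (by positivity) h
  have hxinv : x⁻¹ ≤ (y / γ) ^ q⁻¹ :=
    calc x⁻¹ = (x ^ (-q)) ^ q⁻¹ := by
          rw [← rpow_mul hx.le, neg_mul, mul_inv_cancel₀ hq.ne', rpow_neg_one]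
      _ ≤ (y / γ) ^ q⁻¹ :=
          rpow_le_rpow (by positivity) ((le_div_iff₀' hγ).mpr h) (by positivity)
  calc γ * x ^ (-q - 1) = γ * x ^ (-q) * x⁻¹ := by rw [rpow_sub_one hx.ne']; ring
    _ ≤ y * (y / γ) ^ q⁻¹ := mul_le_mul h hxinv (by positivity) hy.le
    _ = y ^ (1 + q⁻¹) / γ ^ q⁻¹ := by rw [div_rpow hy.le hγ.le, rpow_add hy, rpow_one]; ring

namespace PorousBarrier

variable {a b p q C K r₀ t₀ γ r t : ℝ}

noncomputable def bracket (p q r₀ t₀ γ r t : ℝ) : ℝ :=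
  (r + r₀) ^ (-p) - γ * log (t + t₀) ^ (-q)

noncomputable def barrier (a p q C r₀ t₀ γ r t : ℝ) : ℝ :=
  C * (t + t₀) ^ (-a) * max (bracket p q r₀ t₀ γ r t) 0 ^ a

theorem hasDerivAt_bracket_time (hT : 1 < t + t₀) :
    HasDerivAt (fun τ => bracket p q r₀ t₀ γ r τ)
      (γ * q * log (t + t₀) ^ (-q - 1) / (t + t₀)) t := by
  have hlog := ((hasDerivAt_id' t).add_const t₀).log (by linarith)
  exact (((hlog.rpow_const (Or.inl (log_pos hT).ne')).const_mul γ).const_sub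
    ((r + r₀) ^ (-p))).congr_deriv (by ring)

theorem hasDerivAt_bracket_space (hρ : 0 < r + r₀) :
    HasDerivAt (fun s => bracket p q r₀ t₀ γ s t) (-p * (r + r₀) ^ (-p - 1)) r :=
  ((((hasDerivAt_id' r).add_const r₀).rpow_const (Or.inl hρ.ne')).sub_const
    (γ * log (t + t₀) ^ (-q))).congr_deriv (by ring)

theorem hasDerivAt_barrier_time (hT : 1 < t + t₀) (hF : 0 < bracket p q r₀ t₀ γ r t) :
    HasDerivAt (fun τ => barrier a p q C r₀ t₀ γ r τ)
      (a * C * (t + t₀) ^ (-a - 1) * bracket p q r₀ t₀ γ r t ^ (a - 1) *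
        (γ * q * log (t + t₀) ^ (-q - 1) - bracket p q r₀ t₀ γ r t)) t := by
  have hT0 : 0 < t + t₀ := by linarith
  have hpow := ((hasDerivAt_id' t).add_const t₀).rpow_const (p := -a) (Or.inl hT0.ne')
  refine ((hpow.const_mul C).mul
    ((hasDerivAt_bracket_time hT).max_zero_rpow hF)).congr_deriv ?_
  have hsplitT : (t + t₀) ^ (-a) = (t + t₀) ^ (-a - 1) * (t + t₀) := by
    rw [← rpow_add_one hT0.ne']; ring_nf
  have hsplitF : bracket p q r₀ t₀ γ r t ^ a
      = bracket p q r₀ t₀ γ r t ^ (a - 1) * bracket p q r₀ t₀ γ r t := by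
    rw [← rpow_add_one hF.ne']; ring_nf
  rw [hsplitT, max_eq_left hF.le, hsplitF]
  field_simp
  ring

theorem barrier_rpow_eq (hC : 0 ≤ C) (hT : 0 ≤ t + t₀) (m : ℝ) :
    (fun s => barrier a p q C r₀ t₀ γ s t ^ m)
      = fun s => (C * (t + t₀) ^ (-a)) ^ m * max (bracket p q r₀ t₀ γ s t) 0 ^ (a * m) := by
  funext s
  rw [barrier, mul_rpow (by positivity) (by positivity), ← rpow_mul (le_max_right _ _)]

theorem deriv_mul_bracket_rpow_eventuallyEq (hρ : 0 < r + r₀)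
    (hF : 0 < bracket p q r₀ t₀ γ r t) :
    deriv (fun s => K * max (bracket p q r₀ t₀ γ s t) 0 ^ b) =ᶠ[𝓝 r]
      fun s => K * (-p * (s + r₀) ^ (-p - 1) * b * bracket p q r₀ t₀ γ s t ^ (b - 1)) := by
  have hcont : ContinuousAt (fun s => bracket p q r₀ t₀ γ s t) r :=
    (hasDerivAt_bracket_space hρ).continuousAt
  filter_upwards [hcont.eventually (lt_mem_nhds hF),
    (continuous_add_const r₀).continuousAt.eventually (lt_mem_nhds hρ)] with s hFs hρs
  exact (((hasDerivAt_bracket_space hρs).max_zero_rpow hFs).const_mul K).deriv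

theorem deriv_deriv_mul_bracket_rpow (hρ : 0 < r + r₀) (hF : 0 < bracket p q r₀ t₀ γ r t) :
    deriv (deriv (fun s => K * max (bracket p q r₀ t₀ γ s t) 0 ^ b)) r
      = K * b * p * ((b - 1) * p * ((r + r₀) ^ (-p - 1)) ^ 2
          * bracket p q r₀ t₀ γ r t ^ (b - 2)
        + (p + 1) * (r + r₀) ^ (-p - 2) * bracket p q r₀ t₀ γ r t ^ (b - 1)) := by
  rw [(deriv_mul_bracket_rpow_eventuallyEq hρ hF).deriv_eq]
  have hρpow := ((hasDerivAt_id' r).add_const r₀).rpow_const (p := -p - 1) (Or.inl hρ.ne')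
  have hFpow : HasDerivAt (fun s => bracket p q r₀ t₀ γ s t ^ (b - 1)) _ r :=
    (hasDerivAt_bracket_space hρ).rpow_const (Or.inl hF.ne')
  refine ((((hρpow.const_mul (-p)).mul_const b).mul hFpow).const_mul K).deriv.trans ?_
  rw [show -p - 1 - 1 = -p - 2 by ring, show b - 1 - 1 = b - 2 by ring]
  ring

def IsRadialSubsolutionAt (m μ β : ℝ) (U : ℝ → ℝ → ℝ) (r t : ℝ) : Prop :=
  deriv (fun τ => U r τ) t
    ≤ deriv (deriv fun s => U s t ^ m) r + β * r ^ μ * deriv (fun s => U s t ^ m) r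

theorem barrier_isRadialSubsolutionAt_of_le {m μ β : ℝ} (ha : 0 < a)
    (ham : a * m = a + 1) (hp : 0 < p) (hC : 0 < C) (hρ : 0 < r + r₀) (hT : 1 < t + t₀)
    (hF : 0 < bracket p q r₀ t₀ γ r t)
    (hdrift : β * r ^ μ * (C ^ (m - 1) * (a + 1) * p) * (r + r₀) ^ (-p - 1) ≤ a)
    (habs : γ * q * log (t + t₀) ^ (-q - 1)
      ≤ C ^ (m - 1) * (a + 1) * p * p * ((r + r₀) ^ (-p - 1)) ^ 2) :
    IsRadialSubsolutionAt m μ β (barrier a p q C r₀ t₀ γ) r t := by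
  have hT0 : 0 < t + t₀ := by linarith
  have hK : (C * (t + t₀) ^ (-a)) ^ m = C ^ (m - 1) * (C * (t + t₀) ^ (-a - 1)) := by
    rw [mul_rpow hC.le (by positivity), ← rpow_mul hT0.le, neg_mul, ham, neg_add',
      rpow_sub_one hC.ne']
    field_simp
  have hFa : bracket p q r₀ t₀ γ r t ^ a
      = bracket p q r₀ t₀ γ r t ^ (a - 1) * bracket p q r₀ t₀ γ r t := by
    rw [← rpow_add_one hF.ne']; ring_nf
  unfold IsRadialSubsolutionAt
  rw [barrier_rpow_eq hC.le hT0.le, (hasDerivAt_barrier_time hT hF).deriv,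
    deriv_deriv_mul_bracket_rpow hρ hF, (deriv_mul_bracket_rpow_eventuallyEq hρ hF).eq_of_nhds,
    ham, hK,
    show a + 1 - 1 = a by ring, show a + 1 - 2 = a - 1 by ring, hFa]
  have hX : 0 < C * (t + t₀) ^ (-a - 1) * bracket p q r₀ t₀ γ r t ^ (a - 1) := by positivity
  have hcurv : 0 ≤ C ^ (m - 1) * (a + 1) * p * (p + 1) * (r + r₀) ^ (-p - 2) := by positivity
  linear_combination mul_nonneg hX.le (add_nonneg (add_nonneg (mul_nonneg hcurv hF.le)
    (mul_nonneg (sub_nonneg.mpr hdrift) hF.le)) (mul_nonneg ha.le (sub_nonneg.mpr habs)))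

theorem drift_term_le {m μ β c r ρ : ℝ} (hm : 1 < m) (hμ : 1 ≤ μ)
    (hcβ : c * (m * (μ - 1) * β) ≤ 1) (hr : 0 ≤ r) (hrρ : r ≤ ρ) :
    β * r ^ μ * (c * (1 / (m - 1) + 1) * (μ - 1)) * ρ ^ (-(μ - 1) - 1) ≤ 1 / (m - 1) := by
  have hm1 : 0 < m - 1 := by linarith
  have hρ : 0 ≤ ρ := hr.trans hrρ
  have hrρμ : r ^ μ * ρ ^ (-(μ - 1) - 1) ≤ 1 := by
    rw [show -(μ - 1) - 1 = -μ by ring, rpow_neg hρ, ← div_eq_mul_inv]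
    exact div_le_one_of_le₀ (rpow_le_rpow hr hrρ (by linarith)) (by positivity)
  calc β * r ^ μ * (c * (1 / (m - 1) + 1) * (μ - 1)) * ρ ^ (-(μ - 1) - 1)
      = 1 / (m - 1) * (c * (m * (μ - 1) * β)) * (r ^ μ * ρ ^ (-(μ - 1) - 1)) := by
        field_simp; ring
    _ ≤ 1 / (m - 1) * 1 * 1 := by gcongr
    _ = 1 / (m - 1) := by ring

theorem log_term_le {m μ γ C L ρ : ℝ} (hm : 1 < m) (hμ : 1 < μ) (hC : 0 < C) (hγ : 0 < γ)
    (hL : 0 < L) (hρ : 0 < ρ)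
    (hγC : (m - 1) / (m * (μ - 1) * (μ + 1)) * C ^ (1 - m) ≤ γ ^ ((μ + 1) / (μ - 1)))
    (hγL : γ * L ^ (-((μ - 1) / (μ + 1))) ≤ ρ ^ (-(μ - 1))) :
    γ * ((μ - 1) / (μ + 1)) * L ^ (-((μ - 1) / (μ + 1)) - 1)
      ≤ C ^ (m - 1) * (1 / (m - 1) + 1) * (μ - 1) * (μ - 1) * (ρ ^ (-(μ - 1) - 1)) ^ 2 := by
  have hm1 : 0 < m - 1 := by linarith
  have hμ1 : 0 < μ - 1 := by linarith
  have h1 := mul_rpow_neg_sub_one_le hL hγ (by positivity) hγL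
  rw [inv_div] at h1
  have hρ₁ : (ρ ^ (-(μ - 1))) ^ (1 + (μ + 1) / (μ - 1)) = (ρ ^ (-(μ - 1) - 1)) ^ 2 := by
    rw [← rpow_mul hρ.le, ← rpow_natCast, ← rpow_mul hρ.le]
    congr 1
    field_simp
    ring
  have h2 : (γ ^ ((μ + 1) / (μ - 1)))⁻¹
      ≤ C ^ (m - 1) * (m * (μ - 1) * (μ + 1) / (m - 1)) := by
    have := inv_anti₀ (by positivity) hγC
    rwa [mul_inv, inv_div, show 1 - m = -(m - 1) by ring, rpow_neg hC.le, inv_inv,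
      mul_comm] at this
  calc γ * ((μ - 1) / (μ + 1)) * L ^ (-((μ - 1) / (μ + 1)) - 1)
      = (μ - 1) / (μ + 1) * (γ * L ^ (-((μ - 1) / (μ + 1)) - 1)) := by ring
    _ ≤ (μ - 1) / (μ + 1)
          * ((ρ ^ (-(μ - 1) - 1)) ^ 2 * (γ ^ ((μ + 1) / (μ - 1)))⁻¹) := by
        rw [← hρ₁, ← div_eq_mul_inv]; gcongr
    _ ≤ (μ - 1) / (μ + 1) * ((ρ ^ (-(μ - 1) - 1)) ^ 2
          * (C ^ (m - 1) * (m * (μ - 1) * (μ + 1) / (m - 1)))) := by gcongr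
    _ = C ^ (m - 1) * (1 / (m - 1) + 1) * (μ - 1) * (μ - 1) * (ρ ^ (-(μ - 1) - 1)) ^ 2 := by
        field_simp; ring

end PorousBarrier

open PorousBarrier

/-- Subsolution part of the proof of Theorem 2.6: the explicit barrier
`u̲(r,t) = C (t+t₀)^{-1/(m-1)} [(r+r₀)^{-(μ-1)} − γ (log(t+t₀))^{-(μ-1)/(μ+1)}]₊^{1/(m-1)}`
is a subsolution of the radial porous medium equation
`u_t = (u^m)_{rr} + β r^μ (u^m)_r` in the region `r ≥ 1`, `t > 0` where its bracket is
positive, provided `r₀ ≥ 1`, `0 < C ≤ C̄` and `γ^{(μ+1)/(μ-1)} ≥ k C^{1-m}`. -/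
theorem stmt_9 (m μ β : ℝ) (hm : 1 < m) (hμ : 1 < μ) (hβ : 0 < β) :
    ∃ Cbar > (0:ℝ), ∃ k > (0:ℝ), ∀ r₀ : ℝ, 1 ≤ r₀ →
      ∀ C : ℝ, 0 < C → C ≤ Cbar → ∀ t₀ : ℝ, 1 < t₀ → ∀ γ : ℝ, 0 < γ →
        k * C ^ (1 - m) ≤ γ ^ ((μ + 1) / (μ - 1)) →
        ∀ U : ℝ → ℝ → ℝ,
          (U = fun r t => C * (t + t₀) ^ (-1 / (m - 1)) *
            (max ((r + r₀) ^ (-(μ - 1))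
              - γ * (Real.log (t + t₀)) ^ (-(μ - 1) / (μ + 1))) 0) ^ (1 / (m - 1))) →
          ∀ r : ℝ, 1 ≤ r → ∀ t : ℝ, 0 < t →
            γ * (Real.log (t + t₀)) ^ (-(μ - 1) / (μ + 1)) < (r + r₀) ^ (-(μ - 1)) →
            deriv (fun τ : ℝ => U r τ) t
              ≤ deriv (deriv (fun s : ℝ => U s t ^ m)) r
                + β * r ^ μ * deriv (fun s : ℝ => U s t ^ m) r := by
  have hm1 : 0 < m - 1 := by linarith
  have hμ1 : 0 < μ - 1 := by linarith
  refine ⟨(m * (μ - 1) * β) ^ (-(1 / (m - 1))), by positivity,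
    (m - 1) / (m * (μ - 1) * (μ + 1)), by positivity, ?_⟩
  intro r₀ hr₀ C hC hCbar t₀ ht₀ γ hγ hγC U hU r hr t ht hlt
  have hT : 1 < t + t₀ := by linarith
  have hρ : 0 < r + r₀ := by linarith
  have hCβ : C ^ (m - 1) * (m * (μ - 1) * β) ≤ 1 := by
    have := rpow_le_rpow hC.le hCbar hm1.le
    rw [← rpow_mul (by positivity), neg_mul, one_div_mul_cancel hm1.ne', rpow_neg_one] at this
    calc C ^ (m - 1) * (m * (μ - 1) * β) ≤ (m * (μ - 1) * β)⁻¹ * (m * (μ - 1) * β) := by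
          gcongr
      _ = 1 := inv_mul_cancel₀ (by positivity)
  have hUb : U = barrier (1 / (m - 1)) (μ - 1) ((μ - 1) / (μ + 1)) C r₀ t₀ γ := by
    rw [hU]; funext r t; simp only [barrier, bracket, neg_div]
  rw [neg_div] at hlt
  subst hUb
  exact barrier_isRadialSubsolutionAt_of_le (by positivity) (by field_simp; ring) hμ1 hC hρ hT
    (by rw [bracket]; linarith)
    (drift_term_le hm hμ.le hCβ (by linarith) (by linarith))
    (log_term_le hm hμ hC hγ (log_pos hT) hρ hγC hlt.le)
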